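/- Let K^{BTBM}_t(x) = 2∫₀^∞ (2πs)^{−d/2} e^{−|x|²/(2s)} (2πt)^{−1/2} e^{−s²/(2t)} ds. Then for every d ≥ 4 and every t > 0, ∫_{ℝ^d} [K^{BTBM}_t(x)]² dx = ∞. -/

import Mathlib

open Real MeasureTheory Set

noncomputable def heatK (d : ℕ) (s : ℝ) (x : EuclideanSpace ℝ (Fin d)) : ℝ :=
  (2 * π * s) ^ (-(d : ℝ)/2) * Real.exp (-‖x‖^2 / (2*s))

noncomputable def btbmK (d : ℕ) (t : ℝ) (x : EuclideanSpace ℝ (Fin d)) : ℝ :=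
  2 * ∫ s in Ioi (0:ℝ),
      heatK d s x * ((2 * π * t) ^ (-(1:ℝ)/2) * Real.exp (-s^2 / (2*t)))

/-!
Near the origin the kernel behaves like the Newtonian potential: for `‖x‖² ≤ s ≤ 2‖x‖² ≤ 1`
the integrand is at least a constant times `‖x‖⁻ᵈ`, and this range of `s` has length `‖x‖²`,
so `K_t(x) ≥ c ‖x‖^(2-d)`. Hence `K_t(x)² ≥ c² ‖x‖^(-(2d-4))`, which fails to be integrable
at the origin as soon as `2d - 4 ≥ d`, i.e. `d ≥ 4`.
-/

section NormRpow

variable {E : Type*} [NormedAddCommGroup E] [NormedSpace ℝ E] [FiniteDimensional ℝ E]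
  [Nontrivial E] [MeasurableSpace E] [BorelSpace E] (μ : Measure E) [μ.IsAddHaarMeasure]

theorem lintegral_ball_norm_rpow_eq_top {r α : ℝ} (hr : 0 < r)
    (hα : (Module.finrank ℝ E : ℝ) ≤ α) :
    ∫⁻ x in Metric.ball (0 : E) r, ENNReal.ofReal (‖x‖ ^ (-α)) ∂μ = ⊤ := by
  by_contra hfin
  have hint : IntegrableOn (fun x : E => ‖x‖ ^ (-α)) (Metric.ball 0 r) μ :=
    ⟨(measurable_norm.pow_const _).aestronglyMeasurable,
      (hasFiniteIntegral_iff_ofReal (ae_of_all _ fun x => by positivity)).2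
        (lt_top_iff_ne_top.2 hfin)⟩
  rw [integrableOn_fun_norm_addHaar μ (f := fun y => y ^ (-α))] at hint
  have hpow : IntegrableOn (fun y : ℝ => y ^ ((Module.finrank ℝ E : ℝ) - 1 - α)) (Ioo 0 r) := by
    refine hint.congr_fun (fun y hy => ?_) measurableSet_Ioo
    dsimp only
    rw [smul_eq_mul, ← rpow_natCast, ← rpow_add hy.1, Nat.cast_pred Module.finrank_pos]
    ring_nf
  rw [intervalIntegral.integrableOn_Ioo_rpow_iff hr] at hpow
  linarith

theorem lintegral_eq_top_of_mul_norm_rpow_le {f : E → ENNReal} {r α c : ℝ} (hr : 0 < r)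
    (hα : (Module.finrank ℝ E : ℝ) ≤ α) (hc : 0 < c)
    (hf : ∀ x, 0 < ‖x‖ → ‖x‖ < r → ENNReal.ofReal (c * ‖x‖ ^ (-α)) ≤ f x) :
    ∫⁻ x, f x ∂μ = ⊤ := by
  have hf_ae : ∀ᵐ x ∂μ.restrict (Metric.ball 0 r),
      ENNReal.ofReal c * ENNReal.ofReal (‖x‖ ^ (-α)) ≤ f x := by
    filter_upwards [ae_restrict_mem measurableSet_ball,
      ae_restrict_of_ae (compl_mem_ae_iff.2 (measure_singleton (μ := μ) (0 : E)))] with x hxr hx0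
    rw [← ENNReal.ofReal_mul hc.le]
    exact hf x (norm_pos_iff.2 hx0) (mem_ball_zero_iff.1 hxr)
  refine eq_top_iff.2 (le_trans ?_ (setLIntegral_le_lintegral (Metric.ball 0 r) f))
  calc ⊤ = ENNReal.ofReal c * ∫⁻ x in Metric.ball (0 : E) r, ENNReal.ofReal (‖x‖ ^ (-α)) ∂μ := by
        rw [lintegral_ball_norm_rpow_eq_top μ hr hα, ENNReal.mul_top (by simpa using hc)]
    _ = ∫⁻ x in Metric.ball (0 : E) r, ENNReal.ofReal c * ENNReal.ofReal (‖x‖ ^ (-α)) ∂μ :=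
        (lintegral_const_mul' _ _ ENNReal.ofReal_ne_top).symm
    _ ≤ ∫⁻ x in Metric.ball (0 : E) r, f x ∂μ := lintegral_mono_ae hf_ae

end NormRpow

open scoped Nat

theorem Real.exp_neg_div_le_factorial_mul_pow {a s : ℝ} (ha : 0 < a) (hs : 0 < s) (n : ℕ) :
    exp (-a / s) ≤ n ! * (s / a) ^ n := by
  have h := pow_div_factorial_le_exp _ (div_pos ha hs).le n
  rw [neg_div, exp_neg, div_pow, inv_le_iff_one_le_mul₀ (exp_pos _)]
  rw [div_le_iff₀ (by positivity)] at h
  calc (1 : ℝ) = (a / s) ^ n * (s ^ n / a ^ n) := by rw [div_pow]; field_simp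
    _ ≤ exp (a / s) * n ! * (s ^ n / a ^ n) := by gcongr
    _ = _ := by ring

section Kernel

variable {d : ℕ} {t s : ℝ} {x : EuclideanSpace ℝ (Fin d)}

theorem heatK_nonneg (hs : 0 ≤ s) : 0 ≤ heatK d s x := by
  unfold heatK; positivity

theorem heatK_le_mul_rpow (hx : x ≠ 0) (hs : 0 < s) :
    heatK d s x ≤ (2 * π) ^ (-(d : ℝ) / 2) * d ! * (2 / ‖x‖ ^ 2) ^ d * s ^ ((d : ℝ) / 2) := by
  have hx2 : 0 < ‖x‖ ^ 2 := by positivity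
  have hexp := exp_neg_div_le_factorial_mul_pow hx2 (by positivity : 0 < 2 * s) d
  have hpow : s ^ (-(d : ℝ) / 2) * s ^ d = s ^ ((d : ℝ) / 2) := by
    rw [← rpow_natCast, ← rpow_add hs]; ring_nf
  calc heatK d s x
      ≤ (2 * π) ^ (-(d : ℝ) / 2) * s ^ (-(d : ℝ) / 2) * (d ! * (2 * s / ‖x‖ ^ 2) ^ d) := by
        rw [heatK, mul_rpow (by positivity) hs.le]
        gcongr
    _ = _ := by rw [← hpow, div_pow, div_pow, mul_pow]; field_simp

noncomputable def btbmIntegrand (d : ℕ) (t : ℝ) (x : EuclideanSpace ℝ (Fin d)) (s : ℝ) : ℝ :=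
  heatK d s x * ((2 * π * t) ^ (-(1:ℝ)/2) * Real.exp (-s^2 / (2*t)))

theorem btbmIntegrand_nonneg (ht : 0 ≤ t) (hs : 0 ≤ s) : 0 ≤ btbmIntegrand d t x s :=
  mul_nonneg (heatK_nonneg hs) (by positivity)

theorem integrableOn_btbmIntegrand (ht : 0 < t) (hx : x ≠ 0) :
    IntegrableOn (btbmIntegrand d t x) (Ioi 0) := by
  set C := (2 * π) ^ (-(d : ℝ) / 2) * d ! * (2 / ‖x‖ ^ 2) ^ d * (2 * π * t) ^ (-(1:ℝ)/2) with hC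
  have hdom : IntegrableOn (fun s => C * (s ^ ((d : ℝ) / 2) * exp (-(1 / (2 * t)) * s ^ 2)))
      (Ioi 0) :=
    (integrableOn_rpow_mul_exp_neg_mul_sq (by positivity)
      (neg_one_lt_zero.trans_le (by positivity))).const_mul C
  refine hdom.mono' (by unfold btbmIntegrand heatK; fun_prop) ?_
  filter_upwards [ae_restrict_mem measurableSet_Ioi] with s hs
  rw [norm_of_nonneg (btbmIntegrand_nonneg ht.le (le_of_lt hs))]
  calc btbmIntegrand d t x s
      ≤ (2 * π) ^ (-(d : ℝ) / 2) * d ! * (2 / ‖x‖ ^ 2) ^ d * s ^ ((d : ℝ) / 2)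
        * ((2 * π * t) ^ (-(1:ℝ)/2) * exp (-s ^ 2 / (2 * t))) :=
        mul_le_mul_of_nonneg_right (heatK_le_mul_rpow hx hs) (by positivity)
    _ = _ := by rw [hC]; ring_nf

theorem le_btbmIntegrand (ht : 0 < t) (hx : 0 < ‖x‖) (hs₁ : ‖x‖ ^ 2 ≤ s) (hs₂ : s ≤ 2 * ‖x‖ ^ 2)
    (hs : s ≤ 1) :
    (4 * π * ‖x‖ ^ 2) ^ (-(d : ℝ) / 2) * exp (-1 / 2)
      * ((2 * π * t) ^ (-(1:ℝ)/2) * exp (-1 / (2 * t))) ≤ btbmIntegrand d t x s := by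
  have hs₀ : 0 < s := lt_of_lt_of_le (by positivity) hs₁
  unfold btbmIntegrand heatK
  gcongr ?_ * exp ?_ * (_ * exp ?_)
  · exact rpow_le_rpow_of_nonpos (by positivity) (by nlinarith [pi_pos])
      (by have := d.cast_nonneg (α := ℝ); linarith)
  · rw [neg_div, neg_div, neg_le_neg_iff, div_le_div_iff₀ (by positivity) two_pos]
    linarith
  · rw [neg_div, neg_div, neg_le_neg_iff]
    gcongr
    nlinarith

theorem exists_mul_rpow_le_btbmK (ht : 0 < t) :
    ∃ c > 0, ∀ x : EuclideanSpace ℝ (Fin d), 0 < ‖x‖ → 2 * ‖x‖ ^ 2 ≤ 1 →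
      c * ‖x‖ ^ ((2 : ℝ) - d) ≤ btbmK d t x := by
  set m := (2 * π * t) ^ (-(1:ℝ)/2) * exp (-1 / (2 * t))
  refine ⟨2 * ((4 * π) ^ (-(d : ℝ) / 2) * exp (-1 / 2) * m), by positivity, fun x hx hx₁ => ?_⟩
  set r := ‖x‖
  have hr2 : 0 < r ^ 2 := by positivity
  have hscale : (4 * π * r ^ 2) ^ (-(d : ℝ) / 2) * r ^ 2
      = (4 * π) ^ (-(d : ℝ) / 2) * r ^ ((2 : ℝ) - d) := by
    rw [mul_rpow (by positivity) hr2.le, ← rpow_natCast, ← rpow_mul hx.le, mul_assoc,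
      ← rpow_add hx]
    ring_nf
  have hint := integrableOn_btbmIntegrand ht (norm_pos_iff.1 hx)
  have hsub : Ioc (r ^ 2) (2 * r ^ 2) ⊆ Ioi 0 := fun s hs => hr2.trans hs.1
  calc 2 * ((4 * π) ^ (-(d : ℝ) / 2) * exp (-1 / 2) * m) * r ^ ((2 : ℝ) - d)
      = 2 * ((4 * π * r ^ 2) ^ (-(d : ℝ) / 2) * exp (-1 / 2) * m
          * volume.real (Ioc (r ^ 2) (2 * r ^ 2))) := by
        rw [Real.volume_real_Ioc_of_le (by linarith), show 2 * r ^ 2 - r ^ 2 = r ^ 2 by ring]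
        linear_combination (2 * exp (-1 / 2) * m) * hscale.symm
    _ ≤ 2 * ∫ s in Ioc (r ^ 2) (2 * r ^ 2), btbmIntegrand d t x s := by
        gcongr
        exact setIntegral_ge_of_const_le_real measurableSet_Ioc measure_Ioc_lt_top.ne
          (fun s hs => le_btbmIntegrand ht hx hs.1.le hs.2 (hs.2.trans hx₁)) (hint.mono_set hsub)
    _ ≤ 2 * ∫ s in Ioi 0, btbmIntegrand d t x s := by
        gcongr 2 * ?_
        refine setIntegral_mono_set hint ?_ hsub.eventuallyLE
        filter_upwards [ae_restrict_mem measurableSet_Ioi] with s hs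
        exact btbmIntegrand_nonneg ht.le (le_of_lt hs)
    _ = btbmK d t x := rfl

end Kernel

theorem btbmK_sq_integral_infinite (d : ℕ) (hd : 4 ≤ d) (t : ℝ) (ht : 0 < t) :
    ∫⁻ x : EuclideanSpace ℝ (Fin d), ENNReal.ofReal ((btbmK d t x)^2) = ⊤ := by
  obtain ⟨c, hc, hlow⟩ := exists_mul_rpow_le_btbmK (d := d) ht
  have hdim : Module.finrank ℝ (EuclideanSpace ℝ (Fin d)) = d := finrank_euclideanSpace_fin
  have : Nontrivial (EuclideanSpace ℝ (Fin d)) :=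
    Module.nontrivial_of_finrank_pos (R := ℝ) (by omega)
  have hd' : (4 : ℝ) ≤ d := by exact_mod_cast hd
  refine lintegral_eq_top_of_mul_norm_rpow_le volume (r := 1 / 2) (α := 2 * d - 4)
    (by norm_num) (by rw [hdim]; linarith) (pow_pos hc 2) fun x hx hxr => ?_
  refine ENNReal.ofReal_le_ofReal ?_
  calc c ^ 2 * ‖x‖ ^ (-(2 * d - 4 : ℝ)) = (c * ‖x‖ ^ ((2 : ℝ) - d)) ^ 2 := by
        rw [mul_pow, ← rpow_natCast (‖x‖ ^ _) 2, ← rpow_mul hx.le]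
        ring_nf
    _ ≤ btbmK d t x ^ 2 := pow_le_pow_left₀ (by positivity) (hlow x hx (by nlinarith)) 2
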